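/- With notation as in the prism subdivision, any two nonconsecutive pentatopes τ_i and τ_j with |i − j| ≥ 2 have interiors with empty intersection. -/
import Mathlib

/-- ψ_t : ℝ³ → ℝ⁴, appending the coordinate t. -/
def lift (t : ℝ) (x : Fin 3 → ℝ) : Fin 4 → ℝ := Fin.snoc x t

/-- The separating affine functional: `p ↦ (p 3 - r) - (s - r) * φ (Fin.init p)`. -/
noncomputable def sepMap (φ : (Fin 3 → ℝ) →ᵃ[ℝ] ℝ) (r s : ℝ) :
    (Fin 4 → ℝ) →ᵃ[ℝ] ℝ where
  toFun p := (p 3 - r) - (s - r) * φ (Fin.init p)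
  linear := (LinearMap.proj 3 : (Fin 4 → ℝ) →ₗ[ℝ] ℝ)
      - (s - r) • (φ.linear ∘ₗ LinearMap.funLeft ℝ ℝ Fin.castSucc)
  map_vadd' p v := by
    have h : Fin.init (v +ᵥ p) = Fin.init v +ᵥ Fin.init p := rfl
    have h3 : φ (Fin.init (v +ᵥ p)) = φ.linear (Fin.init v) + φ (Fin.init p) := by
      rw [h]; exact φ.map_vadd _ _
    simp only [vadd_eq_add] at h3
    simp only [vadd_eq_add, LinearMap.sub_apply, LinearMap.smul_apply,
      LinearMap.proj_apply, LinearMap.comp_apply, LinearMap.funLeft_apply]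
    have h4 : (LinearMap.funLeft ℝ ℝ Fin.castSucc) v = Fin.init v := rfl
    rw [h4, h3]
    simp only [Pi.add_apply, smul_eq_mul]
    ring

theorem sepMap_apply (φ : (Fin 3 → ℝ) →ᵃ[ℝ] ℝ) (r s t : ℝ) (x : Fin 3 → ℝ) :
    sepMap φ r s (lift t x) = (t - r) - (s - r) * φ x := by
  have h1 : (lift t x) 3 = t := rfl
  have h2 : Fin.init (lift t x) = x := by
    simp [lift]
  simp [sepMap, h1, h2]

theorem sepMap_linear_single (φ : (Fin 3 → ℝ) →ᵃ[ℝ] ℝ) (r s : ℝ) :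
    (sepMap φ r s).linear (Pi.single 3 1) = 1 := by
  have h : (LinearMap.funLeft ℝ ℝ Fin.castSucc) (Pi.single (3 : Fin 4) (1:ℝ)) = 0 := by
    funext i
    simp only [LinearMap.funLeft_apply, Pi.zero_apply]
    exact Pi.single_eq_of_ne (by exact (Fin.castSucc_lt_last i).ne) 1
  simp [sepMap, h]

/-- Key separation lemma. -/
theorem key_sep (f : (Fin 4 → ℝ) →ᵃ[ℝ] ℝ) (v : Fin 4 → ℝ) (hv : f.linear v = 1)
    (S T : Set (Fin 4 → ℝ)) (hS : ∀ x ∈ S, f x ≤ 0) (hT : ∀ x ∈ T, 0 ≤ f x) :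
    interior (convexHull ℝ S) ∩ interior (convexHull ℝ T) = ∅ := by
  by_contra h
  obtain ⟨x, hxS, hxT⟩ := Set.nonempty_iff_ne_empty.2 h
  have hconvS : convexHull ℝ S ⊆ {y | f y ≤ 0} := by
    apply convexHull_min hS
    exact (convex_Iic (0:ℝ)).affine_preimage f
  have hconvT : convexHull ℝ T ⊆ {y | 0 ≤ f y} := by
    apply convexHull_min hT
    exact (convex_Ici (0:ℝ)).affine_preimage f
  have hfx0 : f x = 0 :=
    le_antisymm (hconvS (interior_subset hxS)) (hconvT (interior_subset hxT))
  obtain ⟨ε, hε, hball⟩ := Metric.mem_nhds_iff.1 (mem_interior_iff_mem_nhds.1 hxS)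
  have hvne : v ≠ 0 := by intro h0; rw [h0, map_zero] at hv; norm_num at hv
  have hvnorm : (0:ℝ) < ‖v‖ := norm_pos_iff.2 hvne
  set δ := ε / (2 * ‖v‖) with hδ
  have hδpos : 0 < δ := by positivity
  have hmem : x + δ • v ∈ convexHull ℝ S := by
    apply hball
    rw [Metric.mem_ball, dist_eq_norm, add_sub_cancel_left, norm_smul,
      Real.norm_eq_abs, abs_of_pos hδpos, hδ, div_mul_eq_mul_div,
      div_lt_iff₀ (by positivity)]
    nlinarith
  have hle : f (x + δ • v) ≤ 0 := hconvS hmem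
  have heq : f (x + δ • v) = f x + δ := by
    have h1 : f (δ • v +ᵥ x) = f.linear (δ • v) +ᵥ f x := f.map_vadd x (δ • v)
    simp only [vadd_eq_add, map_smul, hv, smul_eq_mul, mul_one] at h1
    rw [add_comm x (δ • v), h1, add_comm]
  rw [heq, hfx0] at hle
  linarith

set_option maxHeartbeats 1000000 in
theorem prism_subdivision_nonconsecutive_disjoint_interiors
    (a b c d : Fin 3 → ℝ) (hT : AffineIndependent ℝ ![a, b, c, d])
    (r s : ℝ) (hrs : r < s) :
    (interior (convexHull ℝ {lift r a, lift r b, lift r c, lift r d, lift s d}) ∩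
      interior (convexHull ℝ {lift r a, lift r b, lift s b, lift s c, lift s d}) = ∅) ∧
    (interior (convexHull ℝ {lift r a, lift r b, lift r c, lift r d, lift s d}) ∩
      interior (convexHull ℝ {lift r a, lift s a, lift s b, lift s c, lift s d}) = ∅) ∧
    (interior (convexHull ℝ {lift r a, lift r b, lift r c, lift s c, lift s d}) ∩
      interior (convexHull ℝ ({lift r a, lift s a, lift s b, lift s c, lift s d} :
        Set (Fin 4 → ℝ))) = ∅) := by
  have hsr : (0:ℝ) < s - r := by linarith
  have htot : affineSpan ℝ (Set.range ![a, b, c, d]) = ⊤ := by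
    rw [hT.affineSpan_eq_top_iff_card_eq_finrank_add_one]
    simp
  let B : AffineBasis (Fin 4) ℝ (Fin 3 → ℝ) := ⟨![a, b, c, d], hT, htot⟩
  have hBa : B 0 = a := rfl
  have hBb : B 1 = b := rfl
  have hBc : B 2 = c := rfl
  have hBd : B 3 = d := rfl
  -- φ₁ = δ-coordinate ; φ₂ = γ + δ coordinates
  set φ₁ : (Fin 3 → ℝ) →ᵃ[ℝ] ℝ := B.coord 3 with hφ₁
  set φ₂ : (Fin 3 → ℝ) →ᵃ[ℝ] ℝ := B.coord 2 + B.coord 3 with hφ₂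
  have hφ₁a : φ₁ a = 0 := by rw [hφ₁, ← hBa]; exact B.coord_apply_ne (by decide)
  have hφ₁b : φ₁ b = 0 := by rw [hφ₁, ← hBb]; exact B.coord_apply_ne (by decide)
  have hφ₁c : φ₁ c = 0 := by rw [hφ₁, ← hBc]; exact B.coord_apply_ne (by decide)
  have hφ₁d : φ₁ d = 1 := by rw [hφ₁, ← hBd]; exact B.coord_apply_eq 3
  have hc2a : B.coord 2 a = 0 := by rw [← hBa]; exact B.coord_apply_ne (by decide)
  have hc2b : B.coord 2 b = 0 := by rw [← hBb]; exact B.coord_apply_ne (by decide)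
  have hc2c : B.coord 2 c = 1 := by rw [← hBc]; exact B.coord_apply_eq 2
  have hc2d : B.coord 2 d = 0 := by rw [← hBd]; exact B.coord_apply_ne (by decide)
  have hadd : ∀ x, φ₂ x = B.coord 2 x + B.coord 3 x := fun x => rfl
  have hc3 : ∀ x, B.coord 3 x = φ₁ x := fun x => rfl
  have hφ₂a : φ₂ a = 0 := by rw [hadd, hc3, hc2a, hφ₁a]; ring
  have hφ₂b : φ₂ b = 0 := by rw [hadd, hc3, hc2b, hφ₁b]; ring
  have hφ₂c : φ₂ c = 1 := by rw [hadd, hc3, hc2c, hφ₁c]; ring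
  have hφ₂d : φ₂ d = 1 := by rw [hadd, hc3, hc2d, hφ₁d]; ring
  set f₁ := sepMap φ₁ r s with hf₁
  set f₂ := sepMap φ₂ r s with hf₂
  have hv₁ : f₁.linear (Pi.single 3 1) = 1 := sepMap_linear_single φ₁ r s
  have hv₂ : f₂.linear (Pi.single 3 1) = 1 := sepMap_linear_single φ₂ r s
  have e₁ : ∀ (t : ℝ) (x : Fin 3 → ℝ), f₁ (lift t x) = (t - r) - (s - r) * φ₁ x :=
    fun t x => sepMap_apply φ₁ r s t x
  have e₂ : ∀ (t : ℝ) (x : Fin 3 → ℝ), f₂ (lift t x) = (t - r) - (s - r) * φ₂ x :=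
    fun t x => sepMap_apply φ₂ r s t x
  clear hφ₁ hφ₂ hf₁ hf₂ hadd hc3 hc2a hc2b hc2c hc2d hBa hBb hBc hBd
  clear_value f₁ f₂
  clear_value φ₁ φ₂
  clear_value B
  clear B htot hT
  refine ⟨?_, ?_, ?_⟩
  · apply key_sep f₁ _ hv₁
    · intro x hx
      rcases hx with h | h | h | h | h <;> subst h <;>
        simp only [e₁, hφ₁a, hφ₁b, hφ₁c, hφ₁d] <;> nlinarith
    · intro x hx
      rcases hx with h | h | h | h | h <;> subst h <;>
        simp only [e₁, hφ₁a, hφ₁b, hφ₁c, hφ₁d] <;> nlinarith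
  · apply key_sep f₁ _ hv₁
    · intro x hx
      rcases hx with h | h | h | h | h <;> subst h <;>
        simp only [e₁, hφ₁a, hφ₁b, hφ₁c, hφ₁d] <;> nlinarith
    · intro x hx
      rcases hx with h | h | h | h | h <;> subst h <;>
        simp only [e₁, hφ₁a, hφ₁b, hφ₁c, hφ₁d] <;> nlinarith
  · apply key_sep f₂ _ hv₂
    · intro x hx
      rcases hx with h | h | h | h | h <;> subst h <;>
        simp only [e₂, hφ₂a, hφ₂b, hφ₂c, hφ₂d] <;> nlinarith
    · intro x hx
      rcases hx with h | h | h | h | h <;> subst h <;>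
        simp only [e₂, hφ₂a, hφ₂b, hφ₂c, hφ₂d] <;> nlinarith
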